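/- Let (W, ▷) be a well-founded frame and fix a syntactical λ-algebra (V, ·, ⟦ ⟧). Then I(•(A → B))^η_p = I(•A → •B)^η_p holds for all type expressions A and B, all hereditary type environments η, and all p ∈ W, if and only if the accessibility relation ▷ is locally linear. -/

import Mathlib

namespace LambdaA

/-! ### Type expressions (de Bruijn representation for `μ`-binders) -/

inductive Ty : Type
  | var : ℕ → Ty
  | arrow : Ty → Ty → Ty
  | box : Ty → Ty
  | mu : Ty → Ty
  deriving DecidableEq

namespace Ty

def rename : (ℕ → ℕ) → Ty → Ty
  | f, var n => var (f n)
  | f, arrow A B => arrow (rename f A) (rename f B)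
  | f, box A => box (rename f A)
  | f, mu A => mu (rename (fun n => match n with | 0 => 0 | Nat.succ m => f m + 1) A)

def shiftUp : Ty → Ty := rename Nat.succ

def subst : (ℕ → Ty) → Ty → Ty
  | σ, var n => σ n
  | σ, arrow A B => arrow (subst σ A) (subst σ B)
  | σ, box A => box (subst σ A)
  | σ, mu A => mu (subst (fun n => match n with | 0 => var 0 | Nat.succ m => shiftUp (σ m)) A)

end Ty

/-- `openT A B`: instantiate the outermost bound variable (index `0`) of the body `A` by `B`. -/
def openT (A B : Ty) : Ty :=
  Ty.subst (fun n => match n with | 0 => B | Nat.succ m => Ty.var m) A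

/-- `substFree A X B` is the capture-avoiding substitution `A[B/X]` for the free variable `X`. -/
def substFree (A : Ty) (X : ℕ) (B : Ty) : Ty :=
  Ty.subst (fun n => if n = X then B else Ty.var n) A

/-- The unfolding `μX.A ↦ A[μX.A/X]` of a recursive type. -/
def unfoldMu (A : Ty) : Ty := openT A (Ty.mu A)

/-- Free occurrence of a type variable in a type expression. -/
def freeInTy : ℕ → Ty → Prop
  | X, .var n => n = X
  | X, .arrow A B => freeInTy X A ∨ freeInTy X B
  | X, .box A => freeInTy X A
  | X, .mu A => freeInTy (X + 1) A

/-- Auxiliary ⊤-variant test.  `tvAux A d t` scans the tail of `A`, where `d` is the number of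
`μ`-binders passed so far and `t` is the number of (outermost) such binders inside which a `•`
has already been encountered.  A variable qualifies iff it is bound by one of the `μ`-binders
and at least one `•` occurs inside that binder. -/
def tvAux : Ty → ℕ → ℕ → Bool
  | .var j, d, t => decide (d - t ≤ j ∧ j < d)
  | .box A, d, _ => tvAux A d d
  | .mu A, d, t => tvAux A (d + 1) t
  | .arrow _ B, d, t => tvAux B d t

/-- `A` is a ⊤-variant. -/
def IsTV (A : Ty) : Prop := tvAux A 0 0 = true

/-- `Proper A X` : the type expression `A` is proper in the (free) variable `X`. -/
def Proper : Ty → ℕ → Prop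
  | .var n, X => n ≠ X
  | .box _, _ => True
  | .arrow A B, X => (Proper A X ∧ Proper B X) ∨ IsTV B
  | .mu A, X => Proper A (X + 1) ∨ IsTV (.mu A)

/-- Well-formed type expressions: every recursive type `μX.A` has `A` proper in `X`. -/
def WF : Ty → Prop
  | .var _ => True
  | .arrow A B => WF A ∧ WF B
  | .box A => WF A
  | .mu A => WF A ∧ Proper A 0

/-- `⊤ = μX.•X`. -/
def tyTop : Ty := .mu (.box (.var 0))

/-- `•ⁿ A`. -/
def boxN (n : ℕ) (A : Ty) : Ty := Ty.box^[n] A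

/-- The equivalences `≅` (`s = false`) and `≃` (`s = true`) on type expressions. -/
inductive TyEq : Bool → Ty → Ty → Prop
  | refl (s : Bool) (A : Ty) : TyEq s A A
  | symm {s : Bool} {A B : Ty} : TyEq s A B → TyEq s B A
  | trans {s : Bool} {A B C : Ty} : TyEq s A B → TyEq s B C → TyEq s A C
  | boxCongr {s : Bool} {A B : Ty} : TyEq s A B → TyEq s (.box A) (.box B)
  | arrowCongr {s : Bool} {A B C D : Ty} :
      TyEq s A C → TyEq s B D → TyEq s (.arrow A B) (.arrow C D)
  | arrowTop (s : Bool) (A : Ty) : TyEq s (.arrow A tyTop) tyTop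
  | fix (s : Bool) (A : Ty) : TyEq s (.mu A) (unfoldMu A)
  | uniq {s : Bool} {A C : Ty} : TyEq s A (openT C A) → Proper C 0 → TyEq s A (.mu C)
  | kl (A B : Ty) : TyEq true (.box (.arrow A B)) (.arrow (.box A) (.box B))

/-! ### Subtyping -/

/-- Subtyping assumptions: finite sets of pairs of type variables. -/
abbrev Assum := Finset (ℕ × ℕ)

/-- Well-formedness of a subtyping assumption: every type variable occurs at most once. -/
def AssumOK (γ : Assum) : Prop :=
  (∀ p ∈ γ, (p : ℕ × ℕ).1 ≠ p.2) ∧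
    ∀ p ∈ γ, ∀ q ∈ γ, p ≠ q →
      (p : ℕ × ℕ).1 ≠ (q : ℕ × ℕ).1 ∧ p.1 ≠ q.2 ∧ p.2 ≠ q.1 ∧ p.2 ≠ q.2

/-- `X` occurs in the subtyping assumption `γ`. -/
def AssumVar (γ : Assum) (X : ℕ) : Prop :=
  ∃ p ∈ γ, (p : ℕ × ℕ).1 = X ∨ (p : ℕ × ℕ).2 = X

/-- Derivability of subtyping judgments `γ ⊢ A ⪯ B`. -/
inductive Sub : Assum → Ty → Ty → Prop
  | assump {γ : Assum} {X Y : ℕ} : AssumOK γ → (X, Y) ∈ γ → Sub γ (.var X) (.var Y)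
  | top {γ : Assum} (A : Ty) : AssumOK γ → Sub γ A tyTop
  | refl {γ : Assum} {A B : Ty} : AssumOK γ → TyEq true A B → Sub γ A B
  | trans {γ₁ γ₂ : Assum} {A B C : Ty} :
      Sub γ₁ A B → Sub γ₂ B C → AssumOK (γ₁ ∪ γ₂) → Sub (γ₁ ∪ γ₂) A C
  | boxMono {γ : Assum} {A B : Ty} : Sub γ A B → Sub γ (.box A) (.box B)
  | arrowMono {γ₁ γ₂ : Assum} {A A' B B' : Ty} :
      Sub γ₁ A' A → Sub γ₂ B B' → AssumOK (γ₁ ∪ γ₂) →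
      Sub (γ₁ ∪ γ₂) (.arrow A B) (.arrow A' B')
  | muMono {γ : Assum} {X Y : ℕ} {A B : Ty} :
      AssumOK (insert (X, Y) γ) →
      Sub (insert (X, Y) γ) (openT A (.var X)) (openT B (.var Y)) →
      ¬ AssumVar γ X → ¬ AssumVar γ Y →
      ¬ freeInTy X (openT B (.var Y)) → ¬ freeInTy Y (openT A (.var X)) →
      Proper (openT A (.var X)) X → Proper (openT B (.var Y)) Y →
      Sub γ (.mu A) (.mu B)
  | approx {γ : Assum} (A : Ty) : AssumOK γ → Sub γ A (.box A)

/-! ### Untyped λ-terms (locally-nameless representation) -/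

inductive Tm : Type
  | bvar : ℕ → Tm
  | fvar : ℕ → Tm
  | lam : Tm → Tm
  | app : Tm → Tm → Tm
  deriving DecidableEq

def openTmAux (N : Tm) : ℕ → Tm → Tm
  | _, .fvar y => .fvar y
  | k, .bvar i => if i = k then N else .bvar i
  | k, .lam M => .lam (openTmAux N (k + 1) M)
  | k, .app M₁ M₂ => .app (openTmAux N k M₁) (openTmAux N k M₂)

/-- Instantiate the outermost bound variable of the body `M` by `N`. -/
def openTm (M N : Tm) : Tm := openTmAux N 0 M

/-- `substTm M x N` is the substitution `M[N/x]` for the free variable `x`. -/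
def substTm : Tm → ℕ → Tm → Tm
  | .bvar i, _, _ => .bvar i
  | .fvar y, x, N => if y = x then N else .fvar y
  | .lam M, x, N => .lam (substTm M x N)
  | .app M₁ M₂, x, N => .app (substTm M₁ x N) (substTm M₂ x N)

/-- Free occurrence of an individual variable in a λ-term. -/
def freeTm : ℕ → Tm → Prop
  | _, .bvar _ => False
  | x, .fvar y => y = x
  | x, .lam M => freeTm x M
  | x, .app M₁ M₂ => freeTm x M₁ ∨ freeTm x M₂

/-- One-step β-reduction. -/
inductive Step : Tm → Tm → Prop
  | beta (M N : Tm) : Step (.app (.lam M) N) (openTm M N)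
  | appL {M M' : Tm} (N : Tm) : Step M M' → Step (.app M N) (.app M' N)
  | appR (M : Tm) {N N' : Tm} : Step N N' → Step (.app M N) (.app M N')
  | lamCongr {M M' : Tm} : Step M M' → Step (.lam M) (.lam M')

/-- `→*β`, the reflexive-transitive closure of β-reduction. -/
def Steps : Tm → Tm → Prop := Relation.ReflTransGen Step

/-- β-convertibility `=β`. -/
inductive BetaEq : Tm → Tm → Prop
  | step {M N : Tm} : Step M N → BetaEq M N
  | refl (M : Tm) : BetaEq M M
  | symm {M N : Tm} : BetaEq M N → BetaEq N M
  | trans {M N K : Tm} : BetaEq M N → BetaEq N K → BetaEq M K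

/-! ### Typing -/

/-- Typing contexts: finite sets of (variable, type) pairs. -/
abbrev Ctx := Finset (ℕ × Ty)

/-- Well-formedness of a typing context (functionality). -/
def CtxOK (Γ : Ctx) : Prop :=
  ∀ p ∈ Γ, ∀ q ∈ Γ, (p : ℕ × Ty).1 = (q : ℕ × Ty).1 → p = q

/-- `•Γ`. -/
def boxCtx (Γ : Ctx) : Ctx := Γ.image fun p => (p.1, Ty.box p.2)

/-- All types in the context are well-formed type expressions. -/
def CtxWF (Γ : Ctx) : Prop := ∀ p ∈ Γ, WF (p : ℕ × Ty).2

/-- The typing system λA. -/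
inductive Typing : Ctx → Tm → Ty → Prop
  | var {Γ : Ctx} {x : ℕ} {A : Ty} : CtxOK Γ → (x, A) ∈ Γ → Typing Γ (.fvar x) A
  | shift {Γ : Ctx} {M : Tm} {A : Ty} : Typing (boxCtx Γ) M (.box A) → Typing Γ M A
  | top {Γ : Ctx} (M : Tm) : CtxOK Γ → Typing Γ M tyTop
  | sub {Γ : Ctx} {M : Tm} {A B : Ty} : Typing Γ M A → Sub ∅ A B → Typing Γ M B
  | lamI {Γ : Ctx} {x : ℕ} {A B : Ty} {M : Tm} :
      ¬ freeTm x M →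
      Typing (insert (x, A) Γ) (openTm M (.fvar x)) B →
      Typing Γ (.lam M) (.arrow A B)
  | appE {Γ₁ Γ₂ : Ctx} {M N : Tm} {A B : Ty} :
      Typing Γ₁ M (.arrow A B) → Typing Γ₂ N A → CtxOK (Γ₁ ∪ Γ₂) →
      Typing (Γ₁ ∪ Γ₂) (.app M N) B

/-! ### Frames, λ-algebras and the semantics of types -/

/-- The accessibility relation is conversely well-founded. -/
def ConverselyWF {W : Type*} (acc : W → W → Prop) : Prop :=
  WellFounded fun q p => acc p q

/-- Local linearity of the accessibility relation. -/
def LocallyLinear {W : Type*} (acc : W → W → Prop) : Prop :=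
  ∀ p q, acc p q → ∃ r, Relation.ReflTransGen acc p r ∧ acc r q ∧
    ∀ s, acc r s → Relation.ReflTransGen acc q s

/-- Hereditary type environments. -/
def Hereditary {W : Type*} {V : Type*} (acc : W → W → Prop) (η : ℕ → W → Set V) : Prop :=
  ∀ X p q, acc p q → η X p ⊆ η X q

/-- Syntactical λ-algebras of the untyped λ-calculus. -/
structure LambdaAlgebra (V : Type*) where
  nonempty : Nonempty V
  ap : V → V → V
  den : Tm → (ℕ → V) → V
  den_fvar : ∀ x ρ, den (.fvar x) ρ = ρ x
  den_app : ∀ M N ρ, den (.app M N) ρ = ap (den M ρ) (den N ρ)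
  den_lam : ∀ M x ρ v, ¬ freeTm x M →
    ap (den (.lam M) ρ) v = den (openTm M (.fvar x)) (Function.update ρ x v)
  den_ext : ∀ M ρ ρ', (∀ x, freeTm x M → ρ x = ρ' x) → den M ρ = den M ρ'
  den_beta : ∀ M N ρ, BetaEq M N → den M ρ = den N ρ

/-- The interpretation `I(A)^η_p` of type expressions over a frame, packaged together with
its defining (recursion) equations. -/
structure Interp (W : Type*) (acc : W → W → Prop) (V : Type*) (ap : V → V → V) where
  I : Ty → (ℕ → W → Set V) → W → Set V
  I_tv : ∀ A η p, WF A → IsTV A → I A η p = Set.univ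
  I_var : ∀ X η p, I (.var X) η p = η X p
  I_box : ∀ A η p, WF A → ¬ IsTV (Ty.box A) →
    I (.box A) η p = {u | ∀ q, acc p q → u ∈ I A η q}
  I_arrow : ∀ A B η p, WF A → WF B → ¬ IsTV (Ty.arrow A B) →
    I (.arrow A B) η p =
      {u | ∀ q, Relation.ReflTransGen acc p q → ∀ v ∈ I A η q, ap u v ∈ I B η q}
  I_mu : ∀ A η p, WF (Ty.mu A) → ¬ IsTV (Ty.mu A) →
    I (.mu A) η p = I (unfoldMu A) η p

/-! ### Tail finiteness and related notions -/

/-- The sets `TF^V`. -/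
inductive TFmem : Set ℕ → Ty → Prop
  | var {V : Set ℕ} {X : ℕ} : X ∉ V → TFmem V (.var X)
  | box {V : Set ℕ} {A : Ty} : TFmem V A → TFmem V (.box A)
  | arrow {V : Set ℕ} (A : Ty) {B : Ty} : TFmem V B → TFmem V (.arrow A B)
  | mu {V : Set ℕ} {A : Ty} : WF (.mu A) → TFmem ({0} ∪ (Nat.succ '' V)) A → TFmem V (.mu A)

/-- Shapes `•^{m₀}(B₁ → •^{m₁}(B₂ → ⋯ → •^{m_{n-1}}(Bₙ → •^{mₙ} X)⋯))`. -/
inductive TFShape : Ty → Prop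
  | var (X : ℕ) : TFShape (.var X)
  | box {A : Ty} : TFShape A → TFShape (.box A)
  | arrow (A : Ty) {B : Ty} : TFShape B → TFShape (.arrow A B)

/-- Tail finite type expressions. -/
def TailFinite (A : Ty) : Prop := ∃ C, TFShape C ∧ WF C ∧ TyEq false A C

-- Effectively occurring type variables, positively (`petv`) and negatively (`netv`).
mutual
  def petv : Ty → Finset ℕ
    | .var X => {X}
    | .box A => if tvAux (.box A) 0 0 then ∅ else petv A
    | .arrow A B => if tvAux (.arrow A B) 0 0 then ∅ else netv A ∪ petv B
    | .mu A =>
        if tvAux (.mu A) 0 0 then ∅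
        else if 0 ∈ netv A then ((petv A ∪ netv A).erase 0).image (· - 1)
        else ((petv A).erase 0).image (· - 1)
  def netv : Ty → Finset ℕ
    | .var _ => ∅
    | .box A => if tvAux (.box A) 0 0 then ∅ else netv A
    | .arrow A B => if tvAux (.arrow A B) 0 0 then ∅ else petv A ∪ netv B
    | .mu A =>
        if tvAux (.mu A) 0 0 then ∅
        else if 0 ∈ netv A then ((netv A ∪ petv A).erase 0).image (· - 1)
        else ((netv A).erase 0).image (· - 1)
end

/-- Positively finite type expressions. -/
def PosFin (A : Ty) : Prop :=
  ∀ (s : Bool) (B C : Ty) (X : ℕ), WF B → WF C →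
    TyEq s A (substFree B X C) → X ∈ petv B → X ∉ netv B → TailFinite C

/-- Negatively finite type expressions. -/
def NegFin (A : Ty) : Prop :=
  ∀ (s : Bool) (B C : Ty) (X : ℕ), WF B → WF C →
    TyEq s A (substFree B X C) → X ∈ netv B → X ∉ petv B → TailFinite C

/-! ### Head normal forms, maximality, normal forms -/

/-- `y N₁ … Nₙ` with every argument satisfying `P`. -/
inductive SpineArgs (P : Tm → Prop) : Tm → Prop
  | fvar (x : ℕ) : SpineArgs P (.fvar x)
  | bvar (i : ℕ) : SpineArgs P (.bvar i)
  | app {M N : Tm} : SpineArgs P M → P N → SpineArgs P (.app M N)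

/-- Head normal forms `λx₁…λxₘ. y N₁ … Nₙ` whose arguments satisfy `P`. -/
inductive HNFP (P : Tm → Prop) : Tm → Prop
  | spine {M : Tm} : SpineArgs P M → HNFP P M
  | lam {M : Tm} : HNFP P M → HNFP P (.lam M)

/-- Head normal forms. -/
def HNF : Tm → Prop := HNFP fun _ => True

/-- Maximality at a given depth. -/
def MaxAt : ℕ → Tm → Prop
  | 0, _ => True
  | n + 1, M => ∃ M', Steps M M' ∧ HNFP (MaxAt n) M'

/-- Maximal λ-terms: the Böhm tree contains no `⊥`. -/
def Maximal (M : Tm) : Prop := ∀ n, MaxAt n M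

/-- β-normal forms. -/
def NormalForm (M : Tm) : Prop := ∀ N, ¬ Step M N

/-- Type expressions without any occurrence of the modal operator `•`. -/
def NoBox : Ty → Prop
  | .var _ => True
  | .arrow A B => NoBox A ∧ NoBox B
  | .box _ => False
  | .mu A => NoBox A

/-! ### The modal logic LAμ and its Kripke semantics -/

/-- The logic LAμ (formulae are type expressions). -/
inductive LAmu : Finset Ty → Ty → Prop
  | assump {Γ : Finset Ty} {A : Ty} : LAmu (insert A Γ) A
  | nec {Γ₁ : Finset Ty} (Γ₂ : Finset Ty) {A : Ty} :
      LAmu Γ₁ A → LAmu (Γ₁.image Ty.box ∪ Γ₂) (.box A)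
  | four {Γ : Finset Ty} {A : Ty} : LAmu Γ (.box A) → LAmu Γ (.box (.box A))
  | impI {Γ : Finset Ty} {A B : Ty} : LAmu (insert A Γ) B → LAmu Γ (.arrow A B)
  | impE {Γ₁ Γ₂ : Finset Ty} {A B : Ty} :
      LAmu Γ₁ (.arrow A B) → LAmu Γ₂ A → LAmu (Γ₁ ∪ Γ₂) B
  | fold {Γ : Finset Ty} {A : Ty} : LAmu Γ (unfoldMu A) → LAmu Γ (.mu A)
  | unfold {Γ : Finset Ty} {A : Ty} : LAmu Γ (.mu A) → LAmu Γ (unfoldMu A)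
  | lrule {Γ : Finset Ty} {A B : Ty} :
      LAmu Γ (.arrow (.box A) (.box B)) → LAmu Γ (.box (.arrow A B))
  | approx {Γ : Finset Ty} {A : Ty} : LAmu Γ A → LAmu Γ (.box A)

/-- The Kripke satisfaction relation over an LA-frame `(W, tri, R)` under a valuation `ξ`,
packaged with its defining (recursion) equations. -/
structure SatFun {W : Type*} (tri R : W → W → Prop) (ξ : ℕ → W → Prop) where
  sat : Ty → W → Prop
  sat_tv : ∀ A p, WF A → IsTV A → sat A p
  sat_var : ∀ X p, sat (.var X) p ↔ ξ X p
  sat_box : ∀ A p, WF A → ¬ IsTV (Ty.box A) →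
    (sat (.box A) p ↔ ∀ q, tri p q → sat A q)
  sat_arrow : ∀ A B p, WF A → WF B → ¬ IsTV (Ty.arrow A B) →
    (sat (.arrow A B) p ↔ ∀ q, R p q → sat A q → sat B q)
  sat_mu : ∀ A p, WF (Ty.mu A) → ¬ IsTV (Ty.mu A) →
    (sat (.mu A) p ↔ sat (unfoldMu A) p)

/-!
The inclusion `I(•(A → B)) ⊆ I(•A → •B)` holds on every frame: a world `s` reached by
`p ▷* t ▷ s` is also reached by `p ▷ c ▷* s`, and `I(A → B)` quantifies over all `▷*`-successors.
For the converse inclusion at `q'` with `p ▷ q₀ ▷* q'`, write `p ▷* t ▷ q'` and let `r` be the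
world given by local linearity: every `r`-successor lies above `q'`, so by heredity an argument
`v ∈ I(A)_{q'}` lies in `I(•A)_r`, and `u · v ∈ I(•B)_r ⊆ I(B)_{q'}` because `r ▷ q'`.
Heredity of `I` itself is proved by induction on the world and, for recursive types, on the
number of leading `μ`s, which unfolding decreases for type expressions.

Conversely, given `p ▷ q`, interpret `X₀` at `s` by everything if `q ▷* s` and by nothing
otherwise, and `X₁` at `s` by everything iff some `r` with `p ▷* r ▷ s` sees only worlds above
`q`. Every element of `V` then lies in `I(•X₀ → •X₁)_p`, hence in `I(•(X₀ → X₁))_p`, and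
evaluating at `q` yields exactly the world `r` required by local linearity.
-/

namespace Ty

lemma rename_eq_subst (A : Ty) (f : ℕ → ℕ) : rename f A = subst (fun n => var (f n)) A := by
  induction A generalizing f with
  | var n => rfl
  | arrow A B ihA ihB => simp only [rename, subst, ihA, ihB]
  | box A ih => simp only [rename, subst, ih]
  | mu A ih =>
    rw [rename, subst, ih]
    congr 2
    funext n
    cases n <;> rfl

def headMu : Ty → ℕ
  | mu A => headMu A + 1
  | _ => 0

end Ty

open Ty

lemma tvAux_subst {A : Ty} {σ : ℕ → Ty} {d t : ℕ} (hσ : ∀ j < d, σ j = .var j)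
    (h : tvAux A d t = true) : tvAux (subst σ A) d t = true := by
  induction A generalizing σ d t with
  | var j =>
    simp only [tvAux, decide_eq_true_eq] at h
    rwa [subst, hσ j h.2, tvAux, decide_eq_true_eq]
  | arrow A B _ ihB => exact ihB hσ h
  | box A ih => exact ih hσ h
  | mu A ih =>
    refine ih (fun j hj => ?_) h
    cases j with
    | zero => rfl
    | succ m => show shiftUp (σ m) = _; rw [hσ m (by omega)]; rfl

lemma IsTV.subst {A : Ty} (σ : ℕ → Ty) (h : IsTV A) : IsTV (subst σ A) :=
  tvAux_subst (fun _ hj => absurd hj (Nat.not_lt_zero _)) h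

lemma exists_freeInTy_of_freeInTy_rename {A : Ty} {f : ℕ → ℕ} {X : ℕ}
    (h : freeInTy X (rename f A)) : ∃ j, freeInTy j A ∧ f j = X := by
  induction A generalizing f X with
  | var n => exact ⟨n, rfl, h⟩
  | box A ih => exact ih h
  | arrow A B ihA ihB =>
    rcases h with h | h
    · obtain ⟨j, hj, rfl⟩ := ihA h; exact ⟨j, Or.inl hj, rfl⟩
    · obtain ⟨j, hj, rfl⟩ := ihB h; exact ⟨j, Or.inr hj, rfl⟩
  | mu A ih =>
    obtain ⟨j, hj, he⟩ := ih h
    cases j with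
    | zero => exact absurd he.symm (Nat.succ_ne_zero X)
    | succ m => exact ⟨m, hj, Nat.succ.inj he⟩

lemma not_freeInTy_shiftUp (A : Ty) : ¬ freeInTy 0 (shiftUp A) := fun h => by
  obtain ⟨j, -, hj⟩ := exists_freeInTy_of_freeInTy_rename h
  exact Nat.succ_ne_zero j hj

lemma proper_of_not_freeInTy {A : Ty} {X : ℕ} (h : ¬ freeInTy X A) : Proper A X := by
  induction A generalizing X with
  | var n => exact h
  | box A _ => trivial
  | arrow A B ihA ihB => exact Or.inl ⟨ihA fun hf => h (Or.inl hf), ihB fun hf => h (Or.inr hf)⟩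
  | mu A ih => exact Or.inl (ih h)

lemma Proper.subst {A : Ty} {X : ℕ} {σ : ℕ → Ty} (hX : σ X = .var X)
    (hσ : ∀ j ≠ X, ¬ freeInTy X (σ j)) (h : Proper A X) : Proper (subst σ A) X := by
  induction A generalizing σ X with
  | var n => exact proper_of_not_freeInTy (hσ n h)
  | box A _ => trivial
  | arrow A B ihA ihB =>
    rcases h with ⟨hA, hB⟩ | htv
    · exact Or.inl ⟨ihA hX hσ hA, ihB hX hσ hB⟩
    · exact Or.inr (htv.subst σ)
  | mu A ih =>
    rcases h with h | htv
    · refine Or.inl (ih (by show shiftUp (σ X) = _; rw [hX]; rfl) (fun j hj => ?_) h)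
      cases j with
      | zero => simp [freeInTy]
      | succ m =>
        intro hf
        obtain ⟨i, hi, hiX⟩ := exists_freeInTy_of_freeInTy_rename hf
        exact hσ m (by omega) (by simpa [show i = X by omega] using hi)
    · exact Or.inr (htv.subst σ)

lemma WF.rename {A : Ty} (f : ℕ → ℕ) (h : WF A) : WF (rename f A) := by
  induction A generalizing f with
  | var n => trivial
  | box A ih => exact ih f h
  | arrow A B ihA ihB => exact ⟨ihA f h.1, ihB f h.2⟩
  | mu A ih =>
    refine ⟨ih _ h.1, ?_⟩
    rw [rename_eq_subst]
    refine h.2.subst rfl fun j hj => ?_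
    cases j with
    | zero => exact absurd rfl hj
    | succ m => simp [freeInTy]

lemma WF.subst {A : Ty} {σ : ℕ → Ty} (h : WF A) (hσ : ∀ n, WF (σ n)) : WF (subst σ A) := by
  induction A generalizing σ with
  | var n => exact hσ n
  | box A ih => exact ih h hσ
  | arrow A B ihA ihB => exact ⟨ihA h.1 hσ, ihB h.2 hσ⟩
  | mu A ih =>
    refine ⟨ih h.1 fun n => ?_, h.2.subst rfl fun j hj => ?_⟩
    · cases n with
      | zero => trivial
      | succ m => exact (hσ m).rename _
    · cases j with
      | zero => exact absurd rfl hj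
      | succ m => exact not_freeInTy_shiftUp _

lemma WF.unfoldMu {A : Ty} (h : WF (.mu A)) : WF (unfoldMu A) :=
  WF.subst h.1 fun n => by cases n <;> first | exact h | trivial

lemma headMu_subst_of_tvAux {A : Ty} (σ : ℕ → Ty) {d : ℕ} (h : tvAux A d 0 = true) :
    headMu (subst σ A) = headMu A := by
  induction A generalizing σ d with
  | var j => simp [tvAux] at h; omega
  | box A _ => rfl
  | arrow A B _ _ => rfl
  | mu A ih => exact congrArg (· + 1) (ih _ h)

lemma headMu_subst_of_proper {A : Ty} {X : ℕ} {σ : ℕ → Ty} (hσ : ∀ j ≠ X, ∃ i, σ j = .var i)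
    (h : Proper A X) : headMu (subst σ A) = headMu A := by
  induction A generalizing σ X with
  | var n =>
    obtain ⟨i, hi⟩ := hσ n h
    rw [subst, hi]; rfl
  | box A _ => rfl
  | arrow A B _ _ => rfl
  | mu A ih =>
    rcases h with h | htv
    · refine congrArg (· + 1) (ih (fun j hj => ?_) h)
      cases j with
      | zero => exact ⟨0, rfl⟩
      | succ m =>
        obtain ⟨i, hi⟩ := hσ m (by omega)
        exact ⟨i + 1, by show shiftUp (σ m) = _; rw [hi]; rfl⟩
    · exact headMu_subst_of_tvAux σ htv

/-- Properness in the unfolded variable `X` rules out `A = μX₁…μXₙ.X`, the one shape whose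
leading `μ`s would grow under unfolding. -/
lemma headMu_unfoldMu {A : Ty} (h : Proper A 0) : headMu (unfoldMu A) = headMu A := by
  refine headMu_subst_of_proper (fun j hj => ?_) h
  cases j with
  | zero => exact absurd rfl hj
  | succ m => exact ⟨m, rfl⟩

open Relation

def linearityEnv {W : Type*} (V : Type*) (acc : W → W → Prop) (p q : W) : ℕ → W → Set V :=
  fun X s => {_v | if X = 0 then ReflTransGen acc q s
    else ∃ r, ReflTransGen acc p r ∧ acc r s ∧ ∀ s', acc r s' → ReflTransGen acc q s'}

lemma hereditary_linearityEnv {W : Type*} (V : Type*) (acc : W → W → Prop) (p q : W) :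
    Hereditary acc (linearityEnv V acc p q) := by
  intro X s t hst v hv
  by_cases hX : X = 0
  · simp only [linearityEnv, hX, if_true, Set.mem_ofPred_eq] at hv ⊢
    exact hv.tail hst
  · simp only [linearityEnv, hX, if_false, Set.mem_ofPred_eq] at hv ⊢
    obtain ⟨r, hpr, hrs, hr⟩ := hv
    exact ⟨s, hpr.tail hrs, hst, fun s' hss' => (hr s hrs).tail hss'⟩

namespace Interp

variable {W V : Type*} {acc : W → W → Prop} {ap : V → V → V} (sem : Interp W acc V ap)
  {η : ℕ → W → Set V}

lemma mem_I_box (A : Ty) (hA : WF A) {u : V} {p : W} :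
    u ∈ sem.I (.box A) η p ↔ ∀ q, acc p q → u ∈ sem.I A η q := by
  by_cases htv : IsTV A
  · simp [sem.I_tv A η _ hA htv, sem.I_tv (.box A) η p hA htv]
  · rw [sem.I_box A η p hA htv]
    exact Iff.rfl

lemma mem_I_arrow (A B : Ty) (hA : WF A) (hB : WF B) {u : V} {p : W} :
    u ∈ sem.I (.arrow A B) η p ↔
      ∀ q, ReflTransGen acc p q → ∀ v ∈ sem.I A η q, ap u v ∈ sem.I B η q := by
  by_cases htv : IsTV B
  · simp [sem.I_tv B η _ hB htv, sem.I_tv (.arrow A B) η p ⟨hA, hB⟩ htv]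
  · rw [sem.I_arrow A B η p hA hB htv]
    exact Iff.rfl

lemma I_subset_of_acc (hwf : ConverselyWF acc) (hη : Hereditary acc η) {p q : W}
    (hpq : acc p q) {A : Ty} (hA : WF A) : sem.I A η p ⊆ sem.I A η q := by
  induction p using hwf.induction generalizing q A with
  | _ p ihWorld =>
  induction hn : headMu A using Nat.strong_induction_on generalizing A with
  | _ n ihMu =>
  cases A with
  | var X => simpa only [sem.I_var] using hη X p q hpq
  | box A =>
    intro u hu
    rw [sem.mem_I_box A hA] at hu ⊢
    exact fun s hqs => ihWorld q hpq hqs (A := A) hA (hu q hpq)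
  | arrow A B =>
    intro u hu
    rw [sem.mem_I_arrow A B hA.1 hA.2] at hu ⊢
    exact fun r hqr => hu r (.head hpq hqr)
  | mu A =>
    by_cases htv : IsTV (.mu A)
    · rw [sem.I_tv _ η q hA htv]
      exact Set.subset_univ _
    rw [sem.I_mu A η p hA htv, sem.I_mu A η q hA htv]
    refine ihMu _ ?_ hA.unfoldMu rfl
    rw [← hn, headMu_unfoldMu hA.2]
    exact Nat.lt_succ_self _

lemma I_subset_of_reflTransGen (hwf : ConverselyWF acc) (hη : Hereditary acc η) {p q : W}
    (hpq : ReflTransGen acc p q) {A : Ty} (hA : WF A) : sem.I A η p ⊆ sem.I A η q := by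
  induction hpq with
  | refl => exact subset_rfl
  | tail _ hst ih => exact ih.trans (sem.I_subset_of_acc hwf hη hst hA)

lemma I_box_arrow_subset {A B : Ty} (hA : WF A) (hB : WF B) (p : W) :
    sem.I (.box (.arrow A B)) η p ⊆ sem.I (.arrow (.box A) (.box B)) η p := by
  intro u hu
  rw [sem.mem_I_box (.arrow A B) ⟨hA, hB⟩] at hu
  rw [sem.mem_I_arrow (.box A) (.box B) hA hB]
  intro t hpt v hv
  rw [sem.mem_I_box A hA] at hv
  rw [sem.mem_I_box B hB]
  intro s hts
  obtain ⟨c, hpc, hcs⟩ := TransGen.head'_iff.mp (.tail' hpt hts)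
  exact (sem.mem_I_arrow A B hA hB).mp (hu c hpc) s hcs v (hv s hts)

lemma I_arrow_box_subset_of_locallyLinear (hwf : ConverselyWF acc) (hη : Hereditary acc η)
    (hll : LocallyLinear acc) {A B : Ty} (hA : WF A) (hB : WF B) (p : W) :
    sem.I (.arrow (.box A) (.box B)) η p ⊆ sem.I (.box (.arrow A B)) η p := by
  intro u hu
  rw [sem.mem_I_box (.arrow A B) ⟨hA, hB⟩]
  intro q₀ hpq₀
  rw [sem.mem_I_arrow A B hA hB]
  intro q hq₀q v hv
  obtain ⟨t, hpt, htq⟩ := TransGen.tail'_iff.mp (.head' hpq₀ hq₀q)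
  obtain ⟨r, htr, hrq, hr⟩ := hll t q htq
  have hvr : v ∈ sem.I (.box A) η r := (sem.mem_I_box A hA).mpr fun s hrs =>
    sem.I_subset_of_reflTransGen hwf hη (hr s hrs) hA hv
  have huv := (sem.mem_I_arrow (.box A) (.box B) hA hB).mp hu r (hpt.trans htr) v hvr
  exact (sem.mem_I_box B hB).mp huv q hrq

lemma locallyLinear_of_I_arrow_box_subset [Nonempty V]
    (h : ∀ η, Hereditary acc η → ∀ p, sem.I (.arrow (.box (.var 0)) (.box (.var 1))) η p ⊆
      sem.I (.box (.arrow (.var 0) (.var 1))) η p) :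
    LocallyLinear acc := by
  intro p q hpq
  let η := linearityEnv V acc p q
  obtain ⟨v⟩ := ‹Nonempty V›
  have hv : v ∈ sem.I (.arrow (.box (.var 0)) (.box (.var 1))) η p := by
    rw [sem.mem_I_arrow (.box (.var 0)) (.box (.var 1)) trivial trivial]
    intro t hpt w hw
    rw [sem.mem_I_box (.var 0) trivial] at hw
    rw [sem.mem_I_box (.var 1) trivial]
    intro s hts
    simp only [sem.I_var, η, linearityEnv] at hw ⊢
    exact ⟨t, hpt, hts, hw⟩
  have hvq := (sem.mem_I_box (.arrow (.var 0) (.var 1)) ⟨trivial, trivial⟩).mp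
    (h η (hereditary_linearityEnv V acc p q) p hv) q hpq
  rw [sem.mem_I_arrow (.var 0) (.var 1) trivial trivial] at hvq
  have hq : v ∈ sem.I (.var 0) η q := by
    simp only [sem.I_var, η, linearityEnv]
    exact ReflTransGen.refl
  simpa [sem.I_var, η, linearityEnv] using hvq q .refl v hq

end Interp

/-- Over a well-founded frame, `I(•(A → B))^η_p = I(•A → •B)^η_p` holds for all type
expressions, hereditary type environments and worlds iff the accessibility relation is
locally linear. -/
theorem statement2
    (W : Type*) (hW : Nonempty W) (acc : W → W → Prop) (hwf : ConverselyWF acc)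
    (V : Type*) (alg : LambdaAlgebra V) (Int : Interp W acc V alg.ap) :
    (∀ A B : Ty, WF A → WF B → ∀ η : ℕ → W → Set V, Hereditary acc η → ∀ p : W,
        Int.I (.box (.arrow A B)) η p = Int.I (.arrow (.box A) (.box B)) η p) ↔
      LocallyLinear acc := by
  haveI : Nonempty V := alg.nonempty
  constructor
  · exact fun h => Int.locallyLinear_of_I_arrow_box_subset fun η hη p =>
      (h (.var 0) (.var 1) trivial trivial η hη p).ge
  · exact fun hll A B hA hB η hη p => (Int.I_box_arrow_subset hA hB p).antisymm
      (Int.I_arrow_box_subset_of_locallyLinear hwf hη hll hA hB p)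

end LambdaA
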